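/- arXiv:2304.01832 — 2 statements merged into one kernel-verified Lean document; each statement's English description precedes it below -/
import Mathlib

section
/- Let Γ be a group with finite symmetric generating set A containing the identity, and let L ⊆ A* be a regular language mapping onto Γ under π_A such that for every g ∈ Γ only finitely many words of L represent g. Then there exists a departure function for (Γ, A, L): a function D : ℕ → ℕ such that whenever W ∈ L, r, s ≥ 0, t ≥ D(r), and s + t ≤ |W|, the word-metric distance in Cay(Γ, A) between the prefix evaluations Ŵ(s) and Ŵ(s+t) is at least r. -/
def evalWord {A Γ : Type*} [Group Γ] (φ : A → Γ) (w : List A) : Γ :=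
  (w.map φ).prod

noncomputable def wordDist {A Γ : Type*} [Group Γ] (φ : A → Γ) (g h : Γ) : ℕ :=
  sInf {n : ℕ | ∃ w : List A, w.length = n ∧ evalWord φ w = g⁻¹ * h}

lemma evalWord_append {A Γ : Type*} [Group Γ] (φ : A → Γ) (u v : List A) :
    evalWord φ (u ++ v) = evalWord φ u * evalWord φ v := by
  simp [evalWord]

lemma infinite_of_unbounded_length {α : Type*} {S : Set (List α)}
    (h : ∀ k : ℕ, ∃ w ∈ S, k < w.length) : S.Infinite := by
  by_contra h'
  rw [Set.not_infinite] at h'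
  have hfin := h'
  obtain ⟨k, hk⟩ := (hfin.image List.length).bddAbove
  obtain ⟨w, hwS, hlt⟩ := h k
  exact absurd (hk ⟨w, hwS, rfl⟩) (not_le.mpr hlt)

/-- Let `Γ` be a group with finite symmetric generating set `A` containing the identity,
and let `L` be a regular language over `A` mapping onto `Γ` such that only finitely many
words of `L` represent each element.  Then there exists a departure function for
`(Γ, A, L)`. -/
theorem exists_departure_function {A Γ : Type} [Fintype A] [Group Γ] (φ : A → Γ)
    (hsym : ∀ a : A, ∃ b : A, φ b = (φ a)⁻¹)
    (hid : ∃ a : A, φ a = 1)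
    (L : Language A)
    (hreg : L.IsRegular)
    (hsurj : ∀ g : Γ, ∃ W ∈ L, evalWord φ W = g)
    (hfin : ∀ g : Γ, {W : List A | W ∈ L ∧ evalWord φ W = g}.Finite) :
    ∃ D : ℕ → ℕ, ∀ W ∈ L, ∀ r s t : ℕ, D r ≤ t → s + t ≤ W.length →
      r ≤ wordDist φ (evalWord φ (W.take s)) (evalWord φ (W.take (s + t))) := by
  have key : ∀ r : ℕ, ∃ N : ℕ, ∀ W ∈ L, ∀ s t : ℕ, N ≤ t → s + t ≤ W.length →
      r ≤ wordDist φ (evalWord φ (W.take s)) (evalWord φ (W.take (s + t))) := by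
    intro r
    by_contra hcon
    push_neg at hcon
    choose W hWL s t ht hlen hdist using hcon
    -- pick a short word representing each "close" subword
    have hv : ∀ n : ℕ, ∃ v : List A, v.length < r ∧
        evalWord φ v =
          (evalWord φ ((W n).take (s n)))⁻¹ * evalWord φ ((W n).take (s n + t n)) := by
      intro n
      set g := (evalWord φ ((W n).take (s n)))⁻¹ * evalWord φ ((W n).take (s n + t n)) with hg
      have hne : {m : ℕ | ∃ w : List A, w.length = m ∧ evalWord φ w = g}.Nonempty := by
        obtain ⟨V, _, hV⟩ := hsurj g
        exact ⟨V.length, V, rfl, hV⟩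
      obtain ⟨v, hvl, hve⟩ := Nat.sInf_mem hne
      exact ⟨v, by rw [hvl]; exact hdist n, hve⟩
    choose v hvlen hveq using hv
    -- the subword between positions s and s + t
    let u : ℕ → List A := fun n => ((W n).take (s n + t n)).drop (s n)
    have decomp1 : ∀ n, (W n).take (s n) ++ u n = (W n).take (s n + t n) := by
      intro n
      have h1 : ((W n).take (s n + t n)).take (s n) = (W n).take (s n) := by
        rw [List.take_take, min_eq_left (Nat.le_add_right _ _)]
      conv_lhs => rw [← h1]
      exact List.take_append_drop _ _
    have hul : ∀ n, (u n).length = t n := by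
      intro n
      simp only [u, List.length_drop, List.length_take]
      rw [min_eq_left (hlen n)]
      omega
    have hue : ∀ n, evalWord φ (u n) = evalWord φ (v n) := by
      intro n
      have h := congrArg (evalWord φ) (decomp1 n)
      rw [evalWord_append] at h
      rw [hveq n, ← h, inv_mul_cancel_left]
    -- the DFA and the pigeonhole argument
    obtain ⟨σ, hσ, M, hM⟩ := hreg
    haveI := hσ
    haveI : Finite {w : List A // w.length < r} := (List.finite_length_lt A r).to_subtype
    let F : ℕ → σ × σ × {w : List A // w.length < r} := fun n =>
      (M.eval ((W n).take (s n)), M.eval ((W n).take (s n + t n)), ⟨v n, hvlen n⟩)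
    obtain ⟨y, hy⟩ := Finite.exists_infinite_fiber F
    have hyinf : (F ⁻¹' {y}).Infinite := Set.infinite_coe_iff.mp hy
    obtain ⟨m, hm⟩ := hyinf.nonempty
    refine (hfin (evalWord φ (W m))).not_infinite (infinite_of_unbounded_length ?_)
    intro k
    obtain ⟨n, hn, hnk⟩ := hyinf.exists_notMem_finite (Set.finite_Iic k)
    have hkn : k < n := not_le.mp (fun h => hnk (Set.mem_Iic.mpr h))
    have hF : F n = F m := by
      rw [Set.mem_preimage, Set.mem_singleton_iff] at hn hm
      rw [hn, hm]
    have h1 : M.eval ((W n).take (s n)) = M.eval ((W m).take (s m)) :=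
      congrArg Prod.fst hF
    have h2 : M.eval ((W n).take (s n + t n)) = M.eval ((W m).take (s m + t m)) :=
      congrArg (fun p => p.2.1) hF
    have hveq' : v n = v m := congrArg (fun p => (p.2.2 : {w : List A // w.length < r}).val) hF
    -- swap the subword of W n into W m
    refine ⟨(W m).take (s m) ++ u n ++ (W m).drop (s m + t m), ⟨?_, ?_⟩, ?_⟩
    · -- membership in L
      rw [← hM, DFA.mem_accepts]
      have e1 : M.eval ((W m).take (s m) ++ u n) = M.eval ((W m).take (s m + t m)) := by
        calc M.eval ((W m).take (s m) ++ u n)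
            = M.evalFrom (M.eval ((W m).take (s m))) (u n) := M.evalFrom_of_append _ _ _
          _ = M.evalFrom (M.eval ((W n).take (s n))) (u n) := by rw [h1]
          _ = M.eval ((W n).take (s n) ++ u n) := (M.evalFrom_of_append _ _ _).symm
          _ = M.eval ((W n).take (s n + t n)) := by rw [decomp1 n]
          _ = M.eval ((W m).take (s m + t m)) := h2
      have e2 : M.eval ((W m).take (s m) ++ u n ++ (W m).drop (s m + t m)) = M.eval (W m) := by
        calc M.eval ((W m).take (s m) ++ u n ++ (W m).drop (s m + t m))
            = M.evalFrom (M.eval ((W m).take (s m) ++ u n)) ((W m).drop (s m + t m)) :=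
              M.evalFrom_of_append _ _ _
          _ = M.evalFrom (M.eval ((W m).take (s m + t m))) ((W m).drop (s m + t m)) := by
              rw [e1]
          _ = M.eval ((W m).take (s m + t m) ++ (W m).drop (s m + t m)) :=
              (M.evalFrom_of_append _ _ _).symm
          _ = M.eval (W m) := by rw [List.take_append_drop]
      rw [e2, ← DFA.mem_accepts, hM]
      exact hWL m
    · -- evaluates to the same element
      have hun : evalWord φ (u n) = evalWord φ (u m) := by rw [hue n, hue m, hveq']
      calc evalWord φ ((W m).take (s m) ++ u n ++ (W m).drop (s m + t m))
          = evalWord φ ((W m).take (s m)) * evalWord φ (u n)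
              * evalWord φ ((W m).drop (s m + t m)) := by rw [evalWord_append, evalWord_append]
        _ = evalWord φ ((W m).take (s m)) * evalWord φ (u m)
              * evalWord φ ((W m).drop (s m + t m)) := by rw [hun]
        _ = evalWord φ (W m) := by
              rw [← evalWord_append, ← evalWord_append, decomp1 m, List.take_append_drop]
    · -- long
      have := hul n
      have := ht n
      simp only [List.length_append]
      omega
  choose D hD using key
  exact ⟨D, fun W hW r s t hDt hst => hD r W hW s t hDt hst⟩
end

section
/- Let Γ be a group with finite symmetric generating set A, and suppose Γ has only finitely many cone types with respect to A. Then the language of geodesic words over A is regular. -/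
/-- A word is geodesic if its length equals the word-metric distance from `1` to the
element it represents. -/
def IsGeodesicWord {A Γ : Type*} [Group Γ] (φ : A → Γ) (W : List A) : Prop :=
  W.length = wordDist φ 1 (evalWord φ W)

/-- The cone type of a word `U`: all words `V` such that `UV` is geodesic. -/
def coneType {A Γ : Type*} [Group Γ] (φ : A → Γ) (U : List A) : Language A :=
  {V | IsGeodesicWord φ (U ++ V)}

lemma wordDist_le_length {A Γ : Type*} [Group Γ] (φ : A → Γ) (U : List A) :
    wordDist φ 1 (evalWord φ U) ≤ U.length :=
  Nat.sInf_le ⟨U, rfl, by simp⟩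

lemma geodesic_prefix {A Γ : Type*} [Group Γ] (φ : A → Γ) {U V : List A}
    (h : IsGeodesicWord φ (U ++ V)) : IsGeodesicWord φ U := by
  have hne : {n : ℕ | ∃ w : List A, w.length = n ∧ evalWord φ w = (1 : Γ)⁻¹ * evalWord φ U}.Nonempty :=
    ⟨U.length, U, rfl, by simp⟩
  obtain ⟨w, hwl, hwe⟩ := Nat.sInf_mem hne
  have hle : wordDist φ 1 (evalWord φ (U ++ V)) ≤ wordDist φ 1 (evalWord φ U) + V.length := by
    apply Nat.sInf_le
    refine ⟨w ++ V, by simp [hwl, wordDist], ?_⟩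
    simp only [evalWord_append, inv_one, one_mul] at *
    rw [hwe]
  have h1 := wordDist_le_length φ U
  have h2 : U.length + V.length ≤ wordDist φ 1 (evalWord φ U) + V.length :=
    calc U.length + V.length = wordDist φ 1 (evalWord φ (U ++ V)) := by simpa [IsGeodesicWord] using h
      _ ≤ _ := hle
  exact le_antisymm (by omega) h1

lemma geodesic_nil {A Γ : Type*} [Group Γ] (φ : A → Γ) : IsGeodesicWord φ ([] : List A) := by
  have : wordDist φ 1 (evalWord φ ([] : List A)) ≤ 0 :=
    wordDist_le_length φ []
  simp [IsGeodesicWord]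
  omega

/-- If a group `Γ` with finite symmetric generating set `A` has only finitely many cone
types, then the language of geodesic words over `A` is regular. -/
theorem geodesics_regular_of_finitely_many_cone_types {A Γ : Type*} [Fintype A] [Group Γ]
    (φ : A → Γ)
    (hsym : ∀ a : A, ∃ b : A, φ b = (φ a)⁻¹)
    (hgen : ∀ g : Γ, ∃ w : List A, evalWord φ w = g)
    (hcone : {L : Language A | ∃ U : List A, IsGeodesicWord φ U ∧ L = coneType φ U}.Finite) :
    Language.IsRegular {W : List A | IsGeodesicWord φ W} := by
  classical
  set C : Set (Language A) := {L | ∃ U : List A, IsGeodesicWord φ U ∧ L = coneType φ U} with hC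
  set S : Set (Language A) := insert ⊥ C with hS
  have hSfin : S.Finite := hcone.insert ⊥
  -- closure under derivatives
  have hstep : ∀ L ∈ S, ∀ a : A, {V : List A | a :: V ∈ L} ∈ S := by
    rintro L hL a
    rcases hL with rfl | ⟨U, hU, rfl⟩
    · left
      ext V
      exact iff_of_false (fun h => h) (fun h => h)
    · have hcompute : {V : List A | a :: V ∈ coneType φ U} = coneType φ (U ++ [a]) := by
        ext V
        simp only [Set.mem_setOf_eq, coneType, List.append_assoc, List.cons_append,
          List.nil_append]
        exact Iff.rfl
      by_cases hgeo : IsGeodesicWord φ (U ++ [a])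
      · right
        exact ⟨U ++ [a], hgeo, hcompute⟩
      · left
        rw [hcompute]
        ext V
        exact iff_of_false (fun hV => hgeo (geodesic_prefix φ (V := V) hV)) (fun h => h)
  haveI : Fintype S := hSfin.fintype
  obtain ⟨e⟩ : Nonempty (S ≃ Fin (Fintype.card S)) := ⟨Fintype.equivFin S⟩
  have hstart : coneType φ ([] : List A) ∈ S :=
    Or.inr ⟨[], geodesic_nil φ, rfl⟩
  let M : DFA A (Fin (Fintype.card S)) :=
    { step := fun q a => e ⟨{V : List A | a :: V ∈ (e.symm q).val}, hstep _ (e.symm q).2 a⟩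
      start := e ⟨coneType φ ([] : List A), hstart⟩
      accept := {q | [] ∈ (e.symm q).val} }
  refine ⟨Fin (Fintype.card S), inferInstance, M, ?_⟩
  have key : ∀ (w : List A) (L : Language A) (hL : L ∈ S),
      ((e.symm (M.evalFrom (e ⟨L, hL⟩) w)) : Language A) = {V | w ++ V ∈ L} := by
    intro w
    induction w with
    | nil =>
      intro L hL
      simp only [DFA.evalFrom_nil, Equiv.symm_apply_apply]
      rfl
    | cons a w ih =>
      intro L hL
      have : M.evalFrom (e ⟨L, hL⟩) (a :: w)
          = M.evalFrom (e ⟨{V : List A | a :: V ∈ L}, hstep _ hL a⟩) w := by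
        simp only [DFA.evalFrom, List.foldl_cons]
        congr 1
        show M.step (e ⟨L, hL⟩) a = _
        simp [M]
      rw [this]
      exact ih _ _
  ext w
  rw [DFA.mem_accepts]
  show M.evalFrom M.start w ∈ M.accept ↔ _
  have := key w (coneType φ []) hstart
  constructor
  · intro hw
    have h2 : ([] : List A) ∈ ((e.symm (M.evalFrom (e ⟨_, hstart⟩) w)) : Language A) := hw
    rw [this] at h2
    have h3 : w ++ [] ∈ coneType φ [] := h2
    rw [List.append_nil] at h3
    exact h3
  · intro hw
    show ([] : List A) ∈ ((e.symm (M.evalFrom (e ⟨_, hstart⟩) w)) : Language A)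
    rw [this]
    have h3 : w ∈ coneType φ [] := hw
    show w ++ [] ∈ coneType φ []
    rw [List.append_nil]
    exact h3
end
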